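/- Let K ≥ 1, and for each k = 1, …, K let π_k > 0, μ_k^a ∈ ℝⁿ, μ_k^b ∈ ℝ^m, let Σ_k^{aa} be an n×n real positive definite matrix, and let Σ_k^{ba} be an m×n real matrix. Define N_k(a) = (2π)^{-n/2}(det Σ_k^{aa})^{-1/2} exp(-½(a-μ_k^a)ᵀ(Σ_k^{aa})⁻¹(a-μ_k^a)), h_k(a) = π_k N_k(a)/Σ_{i=1}^K π_i N_i(a), ψ̂_k(a) = μ_k^b + Σ_k^{ba}(Σ_k^{aa})⁻¹(a - μ_k^a), and the GMR map ψ(a) = Σ_{k=1}^K h_k(a) ψ̂_k(a). Then ψ : ℝⁿ → ℝ^m is differentiable at every a, and its m×n Jacobian matrix equals J_ψ(a) = Σ_{k=1}^K [ h_k(a) Σ_k^{ba}(Σ_k^{aa})⁻¹ + h_k(a) ψ̂_k(a) ( Σ_{i=1}^K h_i(a)(Σ_i^{aa})⁻¹(a - μ_i^a) − (Σ_k^{aa})⁻¹(a - μ_k^a) )ᵀ ]. -/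

import Mathlib

open scoped Matrix
open Finset

/-- The multivariate Gaussian density on `ℝⁿ` with mean `μ` and covariance `Cov`:
`N(a | μ, Σ) = (2π)^{-n/2} (det Σ)^{-1/2} exp(-½ (a-μ)ᵀ Σ⁻¹ (a-μ))`. -/
noncomputable def gaussDensity {n : ℕ} (μ : EuclideanSpace ℝ (Fin n))
    (Cov : Matrix (Fin n) (Fin n) ℝ) (a : EuclideanSpace ℝ (Fin n)) : ℝ :=
  (2 * Real.pi) ^ (-(n : ℝ) / 2) * Cov.det ^ (-(1 : ℝ) / 2) *
    Real.exp (-(1 / 2) * ((a - μ) ⬝ᵥ Cov⁻¹.mulVec (a - μ)))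

noncomputable def dotL {n : ℕ} (u : Fin n → ℝ) : EuclideanSpace ℝ (Fin n) →L[ℝ] ℝ :=
  innerSL ℝ ((WithLp.equiv 2 (Fin n → ℝ)).symm u)

lemma dotL_apply {n : ℕ} (u : Fin n → ℝ) (v : EuclideanSpace ℝ (Fin n)) :
    dotL u v = u ⬝ᵥ (WithLp.equiv 2 (Fin n → ℝ)) v := by
  simp [dotL, PiLp.inner_apply, dotProduct, mul_comm]

example : True := trivial

lemma quad_hasFDerivAt {n : ℕ} (M : Matrix (Fin n) (Fin n) ℝ) (hM : M.IsSymm)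
    (μ a : EuclideanSpace ℝ (Fin n)) :
    HasFDerivAt (fun x : EuclideanSpace ℝ (Fin n) => (x - μ) ⬝ᵥ M.mulVec (x - μ))
      ((2 : ℝ) • dotL (M.mulVec (a - μ))) a := by
  set A : EuclideanSpace ℝ (Fin n) →L[ℝ] EuclideanSpace ℝ (Fin n) := LinearMap.toContinuousLinearMap (Matrix.toEuclideanLin M) with hA
  have h1 : HasFDerivAt (fun x : EuclideanSpace ℝ (Fin n) => x - μ) (ContinuousLinearMap.id ℝ (EuclideanSpace ℝ (Fin n))) a :=
    (hasFDerivAt_id a).sub_const μ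
  have h2 : HasFDerivAt (fun x : EuclideanSpace ℝ (Fin n) => A (x - μ)) A a := by
    exact A.hasFDerivAt.comp a h1
  have h3 := h1.inner ℝ h2
  have hAv : ∀ y v : EuclideanSpace ℝ (Fin n), (inner ℝ y (A v) : ℝ) = y ⬝ᵥ M.mulVec v := by
    intro y v
    simp [hA, PiLp.inner_apply, Matrix.toEuclideanLin_apply, dotProduct, Matrix.mulVec, Finset.mul_sum]
    exact Finset.sum_congr rfl fun x _ => by rw [Finset.sum_mul]; exact Finset.sum_congr rfl fun i _ => by ring
  have key : (fun x : EuclideanSpace ℝ (Fin n) => (x - μ) ⬝ᵥ M.mulVec (x - μ)) =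
      fun x : EuclideanSpace ℝ (Fin n) => (inner ℝ (x - μ) (A (x - μ)) : ℝ) := by
    funext x; rw [hAv]; rfl
  rw [key]
  refine h3.congr_fderiv (Eq.symm ?_)
  ext v
  rw [ContinuousLinearMap.comp_apply]
  simp only [fderivInnerCLM_apply, ContinuousLinearMap.prod_apply, ContinuousLinearMap.id_apply]
  rw [hAv, hAv]
  have hsym : ∀ y z : EuclideanSpace ℝ (Fin n), (y : Fin n → ℝ) ⬝ᵥ M.mulVec z = (M.mulVec y) ⬝ᵥ z := by
    intro y z
    rw [Matrix.dotProduct_mulVec, ← Matrix.mulVec_transpose, hM.eq]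
  rw [ContinuousLinearMap.smul_apply, dotL_apply, hsym]
  have : (v : Fin n → ℝ) ⬝ᵥ M.mulVec (a - μ) = (M.mulVec (a - μ)) ⬝ᵥ v := by
    rw [dotProduct_comm]
  rw [show (a - μ).ofLp = a.ofLp - μ.ofLp from rfl, this]
  simp only [smul_eq_mul]
  rw [show ((WithLp.equiv 2 (Fin n → ℝ)) v) = (v : Fin n → ℝ) from rfl]
  ring

lemma gaussDensity_pos {n : ℕ} (μ : EuclideanSpace ℝ (Fin n)) {C : Matrix (Fin n) (Fin n) ℝ}
    (hC : C.PosDef) (a : EuclideanSpace ℝ (Fin n)) : 0 < gaussDensity μ C a := by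
  unfold gaussDensity
  have h1 : (0:ℝ) < (2 * Real.pi) ^ (-(n : ℝ) / 2) :=
    Real.rpow_pos_of_pos (by positivity) _
  have h2 : (0:ℝ) < C.det ^ (-(1:ℝ) / 2) := Real.rpow_pos_of_pos hC.det_pos _
  positivity

lemma inv_isSymm {n : ℕ} {C : Matrix (Fin n) (Fin n) ℝ} (hC : C.PosDef) : (C⁻¹).IsSymm := by
  have := hC.1.inv
  rwa [Matrix.IsHermitian, Matrix.conjTranspose_eq_transpose_of_trivial] at this

lemma gauss_hasFDerivAt {n : ℕ} (μ : EuclideanSpace ℝ (Fin n)) {C : Matrix (Fin n) (Fin n) ℝ}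
    (hC : C.PosDef) (a : EuclideanSpace ℝ (Fin n)) :
    HasFDerivAt (gaussDensity μ C)
      ((-(gaussDensity μ C a)) • dotL (C⁻¹.mulVec (a - μ))) a := by
  have hq := quad_hasFDerivAt C⁻¹ (inv_isSymm hC) μ a
  have h1 := ((hq.const_mul (-(1/2) : ℝ)).exp).const_mul
    ((2 * Real.pi) ^ (-(n : ℝ) / 2) * C.det ^ (-(1 : ℝ) / 2))
  have hfun : gaussDensity μ C = fun x : EuclideanSpace ℝ (Fin n) =>
      (2 * Real.pi) ^ (-(n : ℝ) / 2) * C.det ^ (-(1 : ℝ) / 2) *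
        Real.exp (-(1 / 2) * ((x - μ) ⬝ᵥ C⁻¹.mulVec (x - μ))) := rfl
  rw [hfun]
  refine h1.congr_fderiv (Eq.symm ?_)
  ext v
  simp only [ContinuousLinearMap.smul_apply, smul_eq_mul, dotL_apply, gaussDensity]
  ring

lemma toEuclideanLin_vecMulVec {n m : ℕ} (y : EuclideanSpace ℝ (Fin m)) (c : Fin n → ℝ)
    (v : EuclideanSpace ℝ (Fin n)) :
    Matrix.toEuclideanLin (Matrix.vecMulVec y c) v =
      (c ⬝ᵥ (WithLp.equiv 2 (Fin n → ℝ)) v) • y := by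
  rw [Matrix.toEuclideanLin_apply]
  ext i
  show ∑ j, (y i * c j) * v j = (∑ j, c j * v j) * y i
  rw [Finset.sum_mul]
  exact Finset.sum_congr rfl fun j _ => by ring

/-- the Gaussian-mixture-regression map
`ψ(a) = ∑ₖ h_k(a) (μ_k^b + Σ_k^{ba}(Σ_k^{aa})⁻¹(a − μ_k^a))` is differentiable, and its
Jacobian matrix is
`J_ψ(a) = ∑ₖ h_k(a) [ Σ_k^{ba}(Σ_k^{aa})⁻¹
  + ψ̂_k(a) (∑ᵢ h_i(a)(Σ_i^{aa})⁻¹(a−μ_i^a) − (Σ_k^{aa})⁻¹(a−μ_k^a))ᵀ ]`,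
where the outer product `ψ̂_k(a) (⋯)ᵀ` is the `m×n` matrix `vecMulVec`. -/
theorem gmr_map_jacobian {n m K : ℕ} (hK : 1 ≤ K)
    (w : Fin K → ℝ) (hw : ∀ k, 0 < w k)
    (μa : Fin K → EuclideanSpace ℝ (Fin n))
    (μb : Fin K → EuclideanSpace ℝ (Fin m))
    (Saa : Fin K → Matrix (Fin n) (Fin n) ℝ)
    (hSaa : ∀ k, (Saa k).PosDef)
    (Sba : Fin K → Matrix (Fin m) (Fin n) ℝ)
    (h : Fin K → EuclideanSpace ℝ (Fin n) → ℝ)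
    (hdef : ∀ k a, h k a =
      w k * gaussDensity (μa k) (Saa k) a / ∑ i, w i * gaussDensity (μa i) (Saa i) a)
    (ψhat : Fin K → EuclideanSpace ℝ (Fin n) → EuclideanSpace ℝ (Fin m))
    (hψhat : ∀ k a, ψhat k a =
      μb k + show EuclideanSpace ℝ (Fin m) from
        WithLp.toLp 2 ((Sba k).mulVec ((Saa k)⁻¹.mulVec (a - μa k))))
    (ψ : EuclideanSpace ℝ (Fin n) → EuclideanSpace ℝ (Fin m))
    (hψ : ∀ a, ψ a = ∑ k, h k a • ψhat k a)
    (J : EuclideanSpace ℝ (Fin n) → Matrix (Fin m) (Fin n) ℝ)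
    (hJ : ∀ a, J a = ∑ k, h k a •
      (Sba k * (Saa k)⁻¹ +
        Matrix.vecMulVec (ψhat k a)
          ((∑ i, h i a • (Saa i)⁻¹.mulVec (a - μa i)) - (Saa k)⁻¹.mulVec (a - μa k)))) :
    ∀ a : EuclideanSpace ℝ (Fin n),
      HasFDerivAt ψ (LinearMap.toContinuousLinearMap (Matrix.toEuclideanLin (J a))) a := by
  intro a
  -- abbreviations
  set gk : Fin K → ℝ := fun k => gaussDensity (μa k) (Saa k) a with hgk
  set u : Fin K → Fin n → ℝ := fun k => (Saa k)⁻¹.mulVec (a - μa k) with hu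
  set D : EuclideanSpace ℝ (Fin n) → ℝ :=
    fun x => ∑ i, w i * gaussDensity (μa i) (Saa i) x with hDdef
  have hDa_pos : 0 < D a := by
    apply Finset.sum_pos
    · intro i _
      exact mul_pos (hw i) (gaussDensity_pos (μa i) (hSaa i) a)
    · exact ⟨⟨0, hK⟩, Finset.mem_univ _⟩
  set LD : EuclideanSpace ℝ (Fin n) →L[ℝ] ℝ :=
    ∑ i, w i • ((-(gk i)) • dotL (u i)) with hLD
  have hD : HasFDerivAt D LD a :=
    HasFDerivAt.fun_sum fun i _ => (gauss_hasFDerivAt (μa i) (hSaa i) a).const_mul (w i)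
  have hInv : HasFDerivAt (fun x => (D x)⁻¹) ((-((D a) ^ 2)⁻¹) • LD) a :=
    (hasDerivAt_inv hDa_pos.ne').comp_hasFDerivAt a hD
  set Lh : Fin K → (EuclideanSpace ℝ (Fin n) →L[ℝ] ℝ) := fun k =>
    (w k * gk k) • ((-((D a) ^ 2)⁻¹) • LD) + (D a)⁻¹ • (w k • ((-(gk k)) • dotL (u k)))
    with hLh
  have hhk : ∀ k, HasFDerivAt (h k) (Lh k) a := by
    intro k
    have hfun : h k = fun x => (w k * gaussDensity (μa k) (Saa k) x) * (D x)⁻¹ := by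
      funext x
      rw [hdef k x, div_eq_mul_inv]
    rw [hfun]
    exact ((gauss_hasFDerivAt (μa k) (hSaa k) a).const_mul (w k)).mul hInv
  set T : Fin K → (EuclideanSpace ℝ (Fin n) →L[ℝ] EuclideanSpace ℝ (Fin m)) := fun k =>
    LinearMap.toContinuousLinearMap (Matrix.toEuclideanLin (Sba k * (Saa k)⁻¹)) with hT
  have hψhatD : ∀ k, HasFDerivAt (ψhat k) (T k) a := by
    intro k
    have hfun : ψhat k = fun x => μb k + T k (x - μa k) := by
      funext x
      rw [hψhat k x]
      congr 1
      show WithLp.toLp 2 ((Sba k).mulVec ((Saa k)⁻¹.mulVec (x - μa k))) =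
        Matrix.toEuclideanLin (Sba k * (Saa k)⁻¹) (x - μa k)
      rw [Matrix.toEuclideanLin_apply, Matrix.mulVec_mulVec]
      rfl
    rw [hfun]
    exact (((T k).hasFDerivAt.comp a ((hasFDerivAt_id a).sub_const (μa k))).const_add (μb k))
  have hsum : HasFDerivAt (fun x => ∑ k, h k x • ψhat k x)
      (∑ k, (h k a • T k + (Lh k).smulRight (ψhat k a))) a :=
    HasFDerivAt.fun_sum fun k _ => (hhk k).smul (hψhatD k)
  have hψfun : ψ = fun x => ∑ k, h k x • ψhat k x := funext hψ
  rw [hψfun]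
  convert hsum using 1
  -- equality of the two continuous linear maps
  refine ContinuousLinearMap.ext fun v => ?_
  have hv : ∀ k, Lh k v = h k a * (((∑ i, h i a • u i) - u k) ⬝ᵥ (WithLp.equiv 2 (Fin n → ℝ)) v) := by
    intro k
    set t : Fin K → ℝ := fun i => u i ⬝ᵥ (WithLp.equiv 2 (Fin n → ℝ)) v with ht
    have e0 : (((∑ i, h i a • u i) - u k) ⬝ᵥ (WithLp.equiv 2 (Fin n → ℝ)) v)
        = (∑ i, h i a * t i) - t k := by
      rw [sub_dotProduct]
      congr 1
      have hswap : ∀ f : Fin K → Fin n → ℝ,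
          (∑ i, f i) ⬝ᵥ (WithLp.equiv 2 (Fin n → ℝ)) v = ∑ i, f i ⬝ᵥ (WithLp.equiv 2 (Fin n → ℝ)) v := by
        intro f
        simp only [dotProduct, Finset.sum_apply, Finset.sum_mul]
        exact Finset.sum_comm
      rw [hswap]
      exact Finset.sum_congr rfl fun i _ => by
        rw [smul_dotProduct]; simp [ht]
    have e1 : Lh k v = (w k * gk k) * (-((D a) ^ 2)⁻¹ * (∑ i, w i * (-(gk i) * t i)))
        + (D a)⁻¹ * (w k * (-(gk k) * t k)) := by
      simp only [hLh, ContinuousLinearMap.add_apply, ContinuousLinearMap.smul_apply,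
        ContinuousLinearMap.coe_sum', Finset.sum_apply, smul_eq_mul, dotL_apply, hLD, ht]
    have e2 : ∑ i, w i * (-(gk i) * t i) = -∑ i, w i * gk i * t i := by
      rw [← Finset.sum_neg_distrib]
      exact Finset.sum_congr rfl fun i _ => by ring
    have e3 : ∑ i, h i a * t i = (∑ i, w i * gk i * t i) / D a := by
      rw [Finset.sum_div]
      refine Finset.sum_congr rfl fun i _ => ?_
      rw [hdef i a]
      ring
    rw [e0, e1, e2, e3, hdef k a]
    have hDne : D a ≠ 0 := hDa_pos.ne'
    rw [show (∑ i, w i * gaussDensity (μa i) (Saa i) a) = D a from rfl,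
      show gaussDensity (μa k) (Saa k) a = gk k from rfl]
    field_simp
    ring
  -- now the vector identity
  rw [hJ a]
  simp only [map_sum, map_smul, map_add, LinearMap.coe_toContinuousLinearMap',
    LinearMap.coe_sum, Finset.sum_apply, LinearMap.smul_apply, LinearMap.add_apply,
    ContinuousLinearMap.coe_sum', ContinuousLinearMap.add_apply,
    ContinuousLinearMap.coe_smul', Pi.smul_apply, ContinuousLinearMap.smulRight_apply]
  refine Finset.sum_congr rfl fun k _ => ?_
  rw [toEuclideanLin_vecMulVec, hv k, smul_add, smul_smul]
  congr 1
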